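/- Fix p > 2. There exists a constant C > 0, depending only on p, such that for every integer k ≥ 1 and all independent, mean zero, real-valued random variables X̂_0,…,X̂_{k−1} on a probability space, each with E[|X̂_i|^p] < ∞, one has E[|Σ_{i=0}^{k−1} X̂_i|^p] ≤ C ( (Σ_{i=0}^{k−1} E[X̂_i^2])^{p/2} + Σ_{i=0}^{k−1} E[|X̂_i|^p] ). -/

import Mathlib

/-!
A second-order Taylor bound for `|·| ^ p` gives, pointwise,
`|x + y| ^ p ≤ |x| ^ p + p |x| ^ (p - 2) x y + c (|x| ^ (p - 2) y ^ 2 + |y| ^ p)`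
with `c = p (p - 1) 2 ^ (p - 2)`. Take `x = S_n = X_0 + ⋯ + X_(n-1)` and `y = X_n`: independence
kills the linear term and factorises the quadratic one, and Lyapunov's inequality bounds
`E|S_n| ^ (p - 2)` by `(E|S_n| ^ p) ^ (1 - 2/p)`. Hence `a_n = E|S_n| ^ p` satisfies
`a_(n+1) ≤ a_n + c (a_n ^ (1 - 2/p) E X_n² + E|X_n| ^ p)`. Summing, the maximum `M` of
`a_0, …, a_k` satisfies `M ≤ c (M ^ (1 - 2/p) ∑ E X_i² + ∑ E|X_i| ^ p)`, and Young's inequality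
absorbs the power of `M` on the right, leaving `M ≤ (c ∑ E X_i²) ^ (p/2) + (p/2) c ∑ E|X_i| ^ p`.
-/

open MeasureTheory ProbabilityTheory Finset

lemma hasDerivAt_abs_rpow_mul_self {q : ℝ} (hq : 0 < q) (t : ℝ) :
    HasDerivAt (fun t : ℝ => |t| ^ q * t) ((q + 1) * |t| ^ q) t := by
  have hcont : Continuous fun t : ℝ => |t| ^ q :=
    continuous_abs.rpow_const fun _ => Or.inr hq.le
  refine hasDerivAt_of_hasDerivAt_of_ne' (x := 0) (fun s hs => ?_)
    (hcont.mul continuous_id).continuousAt (continuous_const.mul hcont).continuousAt t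
  have hs' : |s| ≠ 0 := abs_ne_zero.mpr hs
  refine (((hasDerivAt_abs hs).rpow_const (p := q) (Or.inl hs')).mul
    (hasDerivAt_id s)).congr_deriv ?_
  have h : ((SignType.sign s : ℝ) * q * |s| ^ (q - 1)) * s = q * |s| ^ q := by
    rw [mul_comm _ s, ← mul_assoc, ← mul_assoc, self_mul_sign, Real.rpow_sub_one hs']
    field_simp
  simp only [Pi.mul_apply, id, h]
  ring

lemma abs_rpow_mul_self_sub_le {q : ℝ} (hq : 0 < q) (u v : ℝ) :
    |(|v| ^ q * v) - (|u| ^ q * u)| ≤ (q + 1) * (max |u| |v|) ^ q * |v - u| := by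
  have hmem : ∀ {x}, |x| ≤ max |u| |v| → x ∈ Metric.closedBall (0 : ℝ) (max |u| |v|) := by
    intro x hx; simpa using hx
  refine (convex_closedBall _ _).norm_image_sub_le_of_norm_hasDerivWithin_le
    (fun x _ => (hasDerivAt_abs_rpow_mul_self hq x).hasDerivWithinAt) (fun x hx => ?_)
    (hmem (le_max_left _ _)) (hmem (le_max_right _ _))
  have hx : |x| ≤ max |u| |v| := by simpa using hx
  rw [Real.norm_eq_abs, abs_of_nonneg (by positivity)]
  gcongr

lemma Real.add_rpow_le_two_rpow_mul_rpow_add_rpow {a b q : ℝ} (ha : 0 ≤ a) (hb : 0 ≤ b)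
    (hq : 0 ≤ q) :
    (a + b) ^ q ≤ 2 ^ q * (a ^ q + b ^ q) := calc
  (a + b) ^ q ≤ (2 * max a b) ^ q := by rw [two_mul]; gcongr <;> simp
  _ = 2 ^ q * max a b ^ q := Real.mul_rpow zero_le_two (le_max_of_le_left ha)
  _ ≤ 2 ^ q * (a ^ q + b ^ q) := by
    gcongr
    rcases le_total a b with h | h
    · rw [max_eq_right h]; linarith [Real.rpow_nonneg ha q]
    · rw [max_eq_left h]; linarith [Real.rpow_nonneg hb q]

lemma abs_add_rpow_sub_le {p : ℝ} (hp : 2 < p) (x y : ℝ) :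
    |x + y| ^ p - |x| ^ p - p * (|x| ^ (p - 2) * x * y)
      ≤ p * (p - 1) * (|x| + |y|) ^ (p - 2) * y ^ 2 := by
  set g : ℝ → ℝ := fun t => |x + t| ^ p - p * (|x| ^ (p - 2) * x) * t
  have hg : ∀ t, HasDerivAt g (p * (|x + t| ^ (p - 2) * (x + t) - |x| ^ (p - 2) * x)) t := by
    intro t
    have h := ((hasDerivAt_abs_rpow (x + t) (by linarith)).comp t
      ((hasDerivAt_id t).const_add x)).sub ((hasDerivAt_id t).const_mul (p * (|x| ^ (p - 2) * x)))
    exact h.congr_deriv (by ring)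
  have hg' : ∀ t ∈ Metric.closedBall (0 : ℝ) |y|,
      ‖p * (|x + t| ^ (p - 2) * (x + t) - |x| ^ (p - 2) * x)‖
        ≤ p * (p - 1) * (|x| + |y|) ^ (p - 2) * |y| := by
    intro t ht
    have ht : |t| ≤ |y| := by simpa using ht
    have hmax : max |x| |x + t| ≤ |x| + |y| :=
      max_le (by linarith [abs_nonneg y]) ((abs_add_le x t).trans (by linarith))
    calc ‖p * (|x + t| ^ (p - 2) * (x + t) - |x| ^ (p - 2) * x)‖
        ≤ p * ((p - 2 + 1) * (max |x| |x + t|) ^ (p - 2) * |x + t - x|) := by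
          rw [Real.norm_eq_abs, abs_mul, abs_of_pos (by linarith)]
          gcongr
          exact abs_rpow_mul_self_sub_le (by linarith) x (x + t)
      _ ≤ p * ((p - 2 + 1) * (|x| + |y|) ^ (p - 2) * |y|) := by
          rw [add_sub_cancel_left]
          gcongr
      _ = p * (p - 1) * (|x| + |y|) ^ (p - 2) * |y| := by ring
  have hmvt := (convex_closedBall (0 : ℝ) |y|).norm_image_sub_le_of_norm_hasDerivWithin_le
    (fun t _ => (hg t).hasDerivWithinAt) hg' (Metric.mem_closedBall_self (abs_nonneg y))
    (by simp : y ∈ Metric.closedBall (0 : ℝ) |y|)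
  rw [Real.norm_eq_abs, Real.norm_eq_abs, sub_zero] at hmvt
  have hy : |y| * |y| = y ^ 2 := by rw [← sq, sq_abs]
  have := (le_abs_self _).trans hmvt
  simp only [g, add_zero, mul_zero, sub_zero] at this
  rw [mul_assoc _ |y|, hy] at this
  linarith

lemma abs_add_rpow_le {p : ℝ} (hp : 2 < p) (x y : ℝ) :
    |x + y| ^ p ≤ |x| ^ p + p * (|x| ^ (p - 2) * x * y)
      + p * (p - 1) * 2 ^ (p - 2) * (|x| ^ (p - 2) * y ^ 2 + |y| ^ p) := by
  have hy : |y| ^ (p - 2) * y ^ 2 = |y| ^ p := by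
    rw [← sq_abs, ← Real.rpow_natCast, ← Real.rpow_add' (abs_nonneg y) (by norm_num; linarith)]
    norm_num
  have hsplit := Real.add_rpow_le_two_rpow_mul_rpow_add_rpow (abs_nonneg x) (abs_nonneg y)
    (by linarith : (0 : ℝ) ≤ p - 2)
  have hpp : 0 ≤ p * (p - 1) := by nlinarith
  calc |x + y| ^ p ≤ |x| ^ p + p * (|x| ^ (p - 2) * x * y)
        + p * (p - 1) * (|x| + |y|) ^ (p - 2) * y ^ 2 := by
        linarith [abs_add_rpow_sub_le hp x y]
    _ ≤ |x| ^ p + p * (|x| ^ (p - 2) * x * y)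
        + p * (p - 1) * (2 ^ (p - 2) * (|x| ^ (p - 2) + |y| ^ (p - 2))) * y ^ 2 := by gcongr
    _ = _ := by rw [← hy]; ring

lemma le_rpow_add_div_of_le_rpow_mul_add {M a b θ : ℝ} (hM : 0 ≤ M) (ha : 0 ≤ a)
    (hθ₀ : 0 ≤ θ) (hθ₁ : θ < 1) (h : M ≤ M ^ θ * a + b) :
    M ≤ a ^ (1 - θ)⁻¹ + b / (1 - θ) := by
  have hθ : 0 < 1 - θ := sub_pos.mpr hθ₁
  have ha' : 0 ≤ a ^ (1 - θ)⁻¹ := Real.rpow_nonneg ha _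
  have hyoung : M ^ θ * a ≤ θ * M + (1 - θ) * a ^ (1 - θ)⁻¹ := by
    have := Real.geom_mean_le_arith_mean2_weighted hθ₀ hθ.le hM ha' (by ring)
    rwa [← Real.rpow_mul ha, inv_mul_cancel₀ hθ.ne', Real.rpow_one] at this
  rw [← sub_le_iff_le_add', le_div_iff₀ hθ]
  linarith

lemma le_of_forall_succ_le_add_rpow_mul_add {A v m : ℕ → ℝ} {θ : ℝ} {k : ℕ}
    (hA : ∀ n, 0 ≤ A n) (hA₀ : A 0 = 0) (hv : ∀ n, 0 ≤ v n) (hm : ∀ n, 0 ≤ m n)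
    (hθ₀ : 0 ≤ θ) (hθ₁ : θ < 1)
    (hstep : ∀ n < k, A (n + 1) ≤ A n + A n ^ θ * v n + m n) :
    A k ≤ (∑ i ∈ range k, v i) ^ (1 - θ)⁻¹ + (∑ i ∈ range k, m i) / (1 - θ) := by
  obtain ⟨n₀, hn₀, hmax⟩ := (range (k + 1)).exists_max_image A nonempty_range_add_one
  have hn₀k : n₀ ≤ k := Nat.lt_succ_iff.mp (mem_range.mp hn₀)
  have hpartial : ∀ n ≤ k, A n ≤ A n₀ ^ θ * ∑ i ∈ range n, v i + ∑ i ∈ range n, m i := by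
    intro n hn
    induction n with
    | zero => simp [hA₀]
    | succ n ih =>
      have hθmono : A n ^ θ ≤ A n₀ ^ θ :=
        Real.rpow_le_rpow (hA n) (hmax n (mem_range.mpr (by omega))) hθ₀
      rw [sum_range_succ, sum_range_succ]
      linarith [hstep n (by omega), ih (by omega), mul_le_mul_of_nonneg_right hθmono (hv n)]
  calc A k ≤ A n₀ := hmax k (mem_range.mpr k.lt_succ_self)
    _ ≤ _ := le_rpow_add_div_of_le_rpow_mul_add (hA n₀) (sum_nonneg fun i _ => hv i) hθ₀ hθ₁
        ((hpartial n₀ hn₀k).trans (by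
          gcongr
          exacts [Real.rpow_nonneg (hA n₀) θ, fun i _ _ => hv i, fun i _ _ => hm i]))

section Moments

variable {Ω : Type*} [MeasurableSpace Ω] {μ : Measure Ω}

lemma MeasureTheory.MemLp.integrable_abs_rpow [IsFiniteMeasure μ] {f : Ω → ℝ} {p q : ℝ}
    (hf : MemLp f (ENNReal.ofReal p) μ) (hq : 0 ≤ q) (hqp : q ≤ p) :
    Integrable (fun ω => |f ω| ^ q) μ := by
  simpa [ENNReal.toReal_ofReal hq] using
    (hf.mono_exponent (ENNReal.ofReal_le_ofReal hqp)).integrable_norm_rpow'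

lemma integral_abs_rpow_le_rpow_integral_abs_rpow [IsProbabilityMeasure μ] {f : Ω → ℝ}
    {q r : ℝ} (hq : 0 < q) (hqr : q ≤ r) (hf : MemLp f (ENNReal.ofReal r) μ) :
    ∫ ω, |f ω| ^ q ∂μ ≤ (∫ ω, |f ω| ^ r ∂μ) ^ (q / r) := by
  have hr : 0 < r := hq.trans_le hqr
  have hpow : ∀ t : ℝ, (|t| ^ q) ^ (r / q) = |t| ^ r := fun t => by
    rw [← Real.rpow_mul (abs_nonneg t), mul_div_cancel₀ r hq.ne']
  have hjensen : (∫ ω, |f ω| ^ q ∂μ) ^ (r / q) ≤ ∫ ω, |f ω| ^ r ∂μ := by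
    simpa only [Function.comp_def, hpow] using
      (convexOn_rpow ((one_le_div hq).mpr hqr)).map_integral_le
        ((Real.continuous_rpow_const (div_pos hr hq).le).continuousOn) isClosed_Ici
        (ae_of_all _ fun ω => Real.rpow_nonneg (abs_nonneg (f ω)) q)
        (hf.integrable_abs_rpow hq.le hqr)
        (by simpa only [Function.comp_def, hpow] using hf.integrable_abs_rpow hr.le le_rfl)
  have hI : 0 ≤ ∫ ω, |f ω| ^ q ∂μ := integral_nonneg fun ω => Real.rpow_nonneg (abs_nonneg _) q
  calc ∫ ω, |f ω| ^ q ∂μ = ((∫ ω, |f ω| ^ q ∂μ) ^ (r / q)) ^ (q / r) := by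
        rw [← Real.rpow_mul hI, div_mul_div_cancel₀ hq.ne', div_self hr.ne', Real.rpow_one]
    _ ≤ (∫ ω, |f ω| ^ r ∂μ) ^ (q / r) := by gcongr

lemma ProbabilityTheory.IndepFun.integral_abs_add_rpow_le [IsProbabilityMeasure μ] {p : ℝ}
    (hp : 2 < p) {S Y : Ω → ℝ} (hSY : IndepFun S Y μ) (hS : MemLp S (ENNReal.ofReal p) μ)
    (hY : MemLp Y (ENNReal.ofReal p) μ) (hY0 : ∫ ω, Y ω ∂μ = 0) :
    ∫ ω, |S ω + Y ω| ^ p ∂μ ≤ ∫ ω, |S ω| ^ p ∂μ + p * (p - 1) * 2 ^ (p - 2) *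
      ((∫ ω, |S ω| ^ (p - 2) ∂μ) * ∫ ω, Y ω ^ 2 ∂μ + ∫ ω, |Y ω| ^ p ∂μ) := by
  set c := p * (p - 1) * 2 ^ (p - 2)
  have hφ : Continuous fun t : ℝ => |t| ^ (p - 2) :=
    continuous_abs.rpow_const fun _ => Or.inr (by linarith)
  have hψ : Continuous fun t : ℝ => |t| ^ (p - 2) * t := hφ.mul continuous_id
  have hφS : Integrable (fun ω => |S ω| ^ (p - 2)) μ :=
    hS.integrable_abs_rpow (by linarith) (by linarith)
  have hψS : Integrable (fun ω => |S ω| ^ (p - 2) * S ω) μ := by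
    refine (hS.integrable_abs_rpow (q := p - 1) (by linarith) (by linarith)).mono'
      (hψ.comp_aestronglyMeasurable hS.aestronglyMeasurable) (ae_of_all _ fun ω => ?_)
    rw [Real.norm_eq_abs, abs_mul, abs_of_nonneg (Real.rpow_nonneg (abs_nonneg _) _),
      show p - 1 = p - 2 + 1 by ring, Real.rpow_add' (abs_nonneg _) (by linarith), Real.rpow_one]
  have hY1 : Integrable Y μ := hY.integrable (ENNReal.one_le_ofReal.mpr (by linarith))
  have hY2 : Integrable (fun ω => Y ω ^ 2) μ := by
    refine MemLp.integrable_sq ?_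
    simpa using hY.mono_exponent (ENNReal.ofReal_le_ofReal hp.le)
  have hind₁ : IndepFun (fun ω => |S ω| ^ (p - 2) * S ω) Y μ :=
    hSY.comp hψ.measurable measurable_id
  have hind₂ : IndepFun (fun ω => |S ω| ^ (p - 2)) (fun ω => Y ω ^ 2) μ :=
    hSY.comp hφ.measurable (measurable_id.pow_const 2)
  have hlin : ∫ ω, |S ω| ^ (p - 2) * S ω * Y ω ∂μ = 0 := by
    rw [hind₁.integral_fun_mul_eq_mul_integral hψS.aestronglyMeasurable hY1.aestronglyMeasurable,
      hY0, mul_zero]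
  have hquad : ∫ ω, |S ω| ^ (p - 2) * Y ω ^ 2 ∂μ
      = (∫ ω, |S ω| ^ (p - 2) ∂μ) * ∫ ω, Y ω ^ 2 ∂μ :=
    hind₂.integral_fun_mul_eq_mul_integral hφS.aestronglyMeasurable hY2.aestronglyMeasurable
  have hSp := hS.integrable_abs_rpow (by linarith) le_rfl
  have hYp := hY.integrable_abs_rpow (by linarith) le_rfl
  have hlinI : Integrable (fun ω => p * (|S ω| ^ (p - 2) * S ω * Y ω)) μ :=
    (hind₁.integrable_mul hψS hY1).const_mul p
  have hquadI : Integrable (fun ω => |S ω| ^ (p - 2) * Y ω ^ 2) μ := hind₂.integrable_mul hφS hY2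
  have hI₁ : Integrable (fun ω => |S ω| ^ p + p * (|S ω| ^ (p - 2) * S ω * Y ω)) μ :=
    hSp.add hlinI
  have hI₂ : Integrable (fun ω => c * (|S ω| ^ (p - 2) * Y ω ^ 2 + |Y ω| ^ p)) μ :=
    (hquadI.add hYp).const_mul c
  calc ∫ ω, |S ω + Y ω| ^ p ∂μ
      ≤ ∫ ω, |S ω| ^ p + p * (|S ω| ^ (p - 2) * S ω * Y ω)
          + c * (|S ω| ^ (p - 2) * Y ω ^ 2 + |Y ω| ^ p) ∂μ :=
        integral_mono ((hS.add hY).integrable_abs_rpow (by linarith) le_rfl) (hI₁.add hI₂)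
          fun ω => abs_add_rpow_le hp (S ω) (Y ω)
    _ = _ := by
        rw [integral_add hI₁ hI₂, integral_add hSp hlinI, integral_const_mul, integral_const_mul,
          hlin, integral_add hquadI hYp, hquad]
        ring

lemma ProbabilityTheory.iIndepFun.indepFun_sum_range {k n : ℕ} {X : ℕ → Ω → ℝ}
    (hX : iIndepFun (fun i : Fin k => X i) μ) (hmeas : ∀ i < k, Measurable (X i)) (hn : n < k) :
    IndepFun (fun ω => ∑ i ∈ range n, X i ω) (X n) μ := by
  have hlt : ∀ i ∈ range n, i < k := fun i hi => (mem_range.mp hi).trans hn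
  have h := hX.indepFun_finsetSum_of_notMem (fun i => hmeas i i.isLt)
    (s := (range n).attachFin hlt) (i := ⟨n, hn⟩) (by simp [mem_attachFin])
  convert h using 1
  ext ω
  simpa using sum_map ((range n).attachFin hlt) Fin.valEmbedding fun i => X i ω

lemma ProbabilityTheory.iIndepFun.integral_abs_sum_range_succ_rpow_le [IsProbabilityMeasure μ]
    {p : ℝ} (hp : 2 < p) {k n : ℕ} {X : ℕ → Ω → ℝ}
    (hX : iIndepFun (fun i : Fin k => X i) μ) (hmeas : ∀ i < k, Measurable (X i))
    (hmean : ∀ i < k, ∫ ω, X i ω ∂μ = 0) (hLp : ∀ i < k, MemLp (X i) (ENNReal.ofReal p) μ)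
    (hn : n < k) :
    ∫ ω, |∑ i ∈ range (n + 1), X i ω| ^ p ∂μ ≤ ∫ ω, |∑ i ∈ range n, X i ω| ^ p ∂μ
      + (∫ ω, |∑ i ∈ range n, X i ω| ^ p ∂μ) ^ ((p - 2) / p)
          * (p * (p - 1) * 2 ^ (p - 2) * ∫ ω, X n ω ^ 2 ∂μ)
      + p * (p - 1) * 2 ^ (p - 2) * ∫ ω, |X n ω| ^ p ∂μ := by
  have hS : MemLp (fun ω => ∑ i ∈ range n, X i ω) (ENNReal.ofReal p) μ :=
    memLp_finsetSum _ fun i hi => hLp i ((mem_range.mp hi).trans hn)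
  have hc : 0 ≤ p * (p - 1) * 2 ^ (p - 2) := by
    have : 0 ≤ p - 1 := by linarith
    positivity
  calc ∫ ω, |∑ i ∈ range (n + 1), X i ω| ^ p ∂μ
      = ∫ ω, |∑ i ∈ range n, X i ω + X n ω| ^ p ∂μ := by simp only [sum_range_succ]
    _ ≤ ∫ ω, |∑ i ∈ range n, X i ω| ^ p ∂μ + p * (p - 1) * 2 ^ (p - 2) *
          ((∫ ω, |∑ i ∈ range n, X i ω| ^ (p - 2) ∂μ) * ∫ ω, X n ω ^ 2 ∂μ
            + ∫ ω, |X n ω| ^ p ∂μ) :=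
        (hX.indepFun_sum_range hmeas hn).integral_abs_add_rpow_le hp hS (hLp n hn) (hmean n hn)
    _ ≤ ∫ ω, |∑ i ∈ range n, X i ω| ^ p ∂μ + p * (p - 1) * 2 ^ (p - 2) *
          ((∫ ω, |∑ i ∈ range n, X i ω| ^ p ∂μ) ^ ((p - 2) / p) * ∫ ω, X n ω ^ 2 ∂μ
            + ∫ ω, |X n ω| ^ p ∂μ) := by
        gcongr
        exact integral_abs_rpow_le_rpow_integral_abs_rpow (by linarith) (by linarith) hS
    _ = _ := by ring

end Moments

/-- **Rosenthal's inequality.** For `p > 2` there is `C > 0`, depending only on `p`, such that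
for all `k ≥ 1` and all independent, mean zero, real random variables `X̂_0, …, X̂_{k-1}` with
`E[|X̂_i|^p] < ∞`:
`E[|∑ X̂_i|^p] ≤ C ((∑ E[X̂_i^2])^{p/2} + ∑ E[|X̂_i|^p])`. -/
theorem stmt6 (p : ℝ) (hp : 2 < p) :
    ∃ C : ℝ, 0 < C ∧
      ∀ (Ω : Type) (_ : MeasurableSpace Ω) (P : Measure Ω), IsProbabilityMeasure P →
      ∀ (k : ℕ), 1 ≤ k →
      ∀ (X : ℕ → Ω → ℝ),
        iIndepFun (fun i : Fin k => X i) P →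
        (∀ i, i < k → Measurable (X i)) →
        (∀ i, i < k → ∫ ω, X i ω ∂P = 0) →
        (∀ i, i < k → MemLp (X i) (ENNReal.ofReal p) P) →
        (∫ ω, |∑ i ∈ Finset.range k, X i ω| ^ p ∂P)
          ≤ C * ((∑ i ∈ Finset.range k, ∫ ω, (X i ω) ^ 2 ∂P) ^ (p / 2) +
              ∑ i ∈ Finset.range k, ∫ ω, |X i ω| ^ p ∂P) := by
  set c := p * (p - 1) * 2 ^ (p - 2)
  have hc : 0 < c := by
    have : 0 < p - 1 := by linarith
    positivity
  refine ⟨c ^ (p / 2) + p / 2 * c, by positivity, ?_⟩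
  intro Ω _ P _ k _ X hX hmeas hmean hLp
  have hv : ∀ i, 0 ≤ ∫ ω, X i ω ^ 2 ∂P := fun i => integral_nonneg fun ω => sq_nonneg _
  have hm : ∀ i, 0 ≤ ∫ ω, |X i ω| ^ p ∂P := fun i =>
    integral_nonneg fun ω => Real.rpow_nonneg (abs_nonneg _) _
  have key := le_of_forall_succ_le_add_rpow_mul_add
    (A := fun n => ∫ ω, |∑ i ∈ range n, X i ω| ^ p ∂P) (θ := (p - 2) / p)
    (fun n => integral_nonneg fun ω => Real.rpow_nonneg (abs_nonneg _) p)
    (by simp [Real.zero_rpow (by linarith : p ≠ 0)])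
    (fun i => mul_nonneg hc.le (hv i)) (fun i => mul_nonneg hc.le (hm i))
    (by positivity) (by rw [div_lt_one (by linarith)]; linarith)
    fun n hn => hX.integral_abs_sum_range_succ_rpow_le hp hmeas hmean hLp hn
  have hθ : (1 - (p - 2) / p)⁻¹ = p / 2 := by field_simp; ring
  rw [← mul_sum, ← mul_sum, hθ, Real.mul_rpow hc.le (sum_nonneg fun i _ => hv i),
    div_eq_mul_inv _ (1 - _), hθ] at key
  refine key.trans ?_
  set σ := ∑ i ∈ range k, ∫ ω, X i ω ^ 2 ∂P
  set b := ∑ i ∈ range k, ∫ ω, |X i ω| ^ p ∂P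
  have hσ : 0 ≤ σ ^ (p / 2) := Real.rpow_nonneg (sum_nonneg fun i _ => hv i) _
  have hb : 0 ≤ b := sum_nonneg fun i _ => hm i
  have hcp : 0 ≤ c ^ (p / 2) := Real.rpow_nonneg hc.le _
  linarith [mul_nonneg hcp hb, mul_nonneg (mul_nonneg hc.le hσ) (by linarith : 0 ≤ p / 2)]
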